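/- Let F_q be a finite field, k ≥ 1, let α_{i_1},…,α_{i_{k−1}} ∈ F_q be distinct and b,c,λ,η ∈ F_q. Let B be the k×k matrix whose r-th row, for 1 ≤ r ≤ k−1, is (α_{i_1}^{r−1}, …, α_{i_{k−1}}^{r−1}, b^{r−1}−λc^{r−1}) and whose last row is (α_{i_1}^{k−1}+η α_{i_1}^k, …, α_{i_{k−1}}^{k−1}+η α_{i_{k−1}}^k, b^{k−1}−λc^{k−1}+η(b^k−λc^k)). Then det B = ∏_{1≤j<ℓ≤k−1}(α_{i_ℓ}−α_{i_j}) · (Ψ_J(b) − λ Ψ_J(c)), where J = {i_1,…,i_{k−1}} and Ψ_J(x) = ∏_{j=1}^{k−1}(x−α_{i_j})·(1 + ηx + η Σ_{j=1}^{k−1} α_{i_j}). -/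

import Mathlib

/-! `B` is the transposed Vandermonde matrix of the nodes `α_{i_1}, …, α_{i_{k-1}}, x` with its
last row `x ^ (k - 1)` twisted to `x ^ (k - 1) + η x ^ k`, except that its last column is the
combination `col(b) - λ col(c)`. By linearity in that column, `det B` is the difference of the
twisted Vandermonde determinants at `x = b` and `x = c`, and a twisted Vandermonde determinant
is the ordinary one times `1 + η ∑ nodes`. -/

open Polynomial Finset

noncomputable section

variable {F : Type*} [Field F]

/-- The twisted polynomial `∑_{i<k} f_i x^i + η f_h x^{k-1+t}` from `V_{k,t,h,η}`. -/
def twPoly (k t h : ℕ) (η : F) (f : Fin k → F) : Polynomial F :=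
  (∑ i : Fin k, Polynomial.C (f i) * Polynomial.X ^ (i : ℕ)) +
    Polynomial.C (η * if hh : h < k then f ⟨h, hh⟩ else 0) * Polynomial.X ^ (k - 1 + t)

/-- The coefficient `f_{k-1}` of a coefficient vector `f : Fin k → F`. -/
def topCoeffFin {k : ℕ} (f : Fin k → F) : F :=
  if hk : k - 1 < k then f ⟨k - 1, hk⟩ else 0

/-- Codewords of the row-column twisted Reed-Solomon code. -/
def rctrsWords (k t h : ℕ) (η : F) {m : ℕ} (α : Fin m → F) (b c lam : F) :
    Set (Fin (m + 1) → F) :=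
  { w | ∃ f : Fin k → F,
      w = Fin.snoc (fun i => (twPoly k t h η f).eval (α i))
            ((twPoly k t h η f).eval b - lam * (twPoly k t h η f).eval c) }

/-- The row-column twisted Reed-Solomon code `RCTRS_{h,t}(α,b,c,λ,η)`. -/
def RCTRS (k t h : ℕ) (η : F) {m : ℕ} (α : Fin m → F) (b c lam : F) :
    Submodule F (Fin (m + 1) → F) :=
  Submodule.span F (rctrsWords k t h η α b c lam)

/-- Codewords of the extended row-column twisted Reed-Solomon code. -/
def rctrsWordsExt (k t h : ℕ) (η : F) {m : ℕ} (α : Fin m → F) (b c lam : F) :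
    Set (Fin (m + 2) → F) :=
  { w | ∃ f : Fin k → F,
      w = Fin.snoc (Fin.snoc (fun i => (twPoly k t h η f).eval (α i))
            ((twPoly k t h η f).eval b - lam * (twPoly k t h η f).eval c)) (topCoeffFin f) }

/-- The extended row-column twisted Reed-Solomon code `RCTRS_{h,t}(α,b,c,λ,η,∞)`. -/
def RCTRSext (k t h : ℕ) (η : F) {m : ℕ} (α : Fin m → F) (b c lam : F) :
    Submodule F (Fin (m + 2) → F) :=
  Submodule.span F (rctrsWordsExt k t h η α b c lam)

/-- Hamming weight. -/
def wt {n : ℕ} (x : Fin n → F) : ℕ := Nat.card {i : Fin n // x i ≠ 0}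

/-- An `[n,k]` code is MDS if it has dimension `k` and minimum Hamming distance `n-k+1`. -/
def IsMDS {n : ℕ} (C : Submodule F (Fin n → F)) (k : ℕ) : Prop :=
  Module.finrank F C = k ∧ ∀ x ∈ C, x ≠ 0 → n - k + 1 ≤ wt x

/-- The Schur square of a code. -/
def schurSq {n : ℕ} (C : Submodule F (Fin n → F)) : Submodule F (Fin n → F) :=
  Submodule.span F { w | ∃ x ∈ C, ∃ y ∈ C, w = x * y }

/-- Code equivalence: a permutation of coordinates followed by nonzero coordinatewise scaling. -/
def codeEquiv {n : ℕ} (C D : Submodule F (Fin n → F)) : Prop :=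
  ∃ σ : Equiv.Perm (Fin n), ∃ v : Fin n → F, (∀ i, v i ≠ 0) ∧
    (C : Set (Fin n → F)) =
      (fun x : Fin n → F => fun i => v i * x (σ i)) '' (D : Set (Fin n → F))

/-- Generalized Reed-Solomon code. -/
def GRS (k : ℕ) {n : ℕ} (α v : Fin n → F) : Submodule F (Fin n → F) :=
  Submodule.span F
    { w | ∃ f ∈ Polynomial.degreeLT F k, w = fun i => v i * Polynomial.eval (α i) f }

/-- Extended generalized Reed-Solomon code. -/
def GRSext (k : ℕ) {n : ℕ} (α v : Fin n → F) : Submodule F (Fin (n + 1) → F) :=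
  Submodule.span F
    { w | ∃ f ∈ Polynomial.degreeLT F k,
        w = Fin.snoc (fun i => v i * Polynomial.eval (α i) f) (f.coeff (k - 1)) }

/-- A code of length `m+1` is non-RS if it is equivalent to no GRS and no extended GRS code. -/
def IsNonRS {m : ℕ} (C : Submodule F (Fin (m + 1) → F)) : Prop :=
  (∀ (k' : ℕ) (α v : Fin (m + 1) → F), Function.Injective α → (∀ i, v i ≠ 0) →
      ¬ codeEquiv C (GRS k' α v)) ∧
  (∀ (k' : ℕ) (α v : Fin m → F), Function.Injective α → (∀ i, v i ≠ 0) →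
      ¬ codeEquiv C (GRSext k' α v))

/-- Column twisted Reed-Solomon code. -/
def CTRS (k : ℕ) {m : ℕ} (α : Fin m → F) (b c lam : F) : Submodule F (Fin (m + 1) → F) :=
  Submodule.span F
    { w | ∃ f ∈ Polynomial.degreeLT F k,
        w = Fin.snoc (fun i => Polynomial.eval (α i) f)
              (Polynomial.eval b f - lam * Polynomial.eval c f) }

/-- Extended column twisted Reed-Solomon code. -/
def CTRSext (k : ℕ) {m : ℕ} (α : Fin m → F) (b c lam : F) : Submodule F (Fin (m + 2) → F) :=
  Submodule.span F
    { w | ∃ f ∈ Polynomial.degreeLT F k,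
        w = Fin.snoc (Fin.snoc (fun i => Polynomial.eval (α i) f)
              (Polynomial.eval b f - lam * Polynomial.eval c f)) (f.coeff (k - 1)) }

/-- `Φ_J(x) = ∏_{j∈J}(x−α_j)·(1 + (−1)^{|J|} η x ∏_{j∈J} α_j)`. -/
def PhiRC {m : ℕ} (α : Fin m → F) (η : F) (J : Finset (Fin m)) (x : F) : F :=
  (∏ j ∈ J, (x - α j)) * (1 + (-1 : F) ^ J.card * η * x * ∏ j ∈ J, α j)

/-- `Ψ_J(x) = ∏_{j∈J}(x−α_j)·(1 + ηx + η Σ_{j∈J} α_j)`. -/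
def PsiRC {m : ℕ} (α : Fin m → F) (η : F) (J : Finset (Fin m)) (x : F) : F :=
  (∏ j ∈ J, (x - α j)) * (1 + η * x + η * ∑ j ∈ J, α j)

/-- `Φ_{J,h}(x) = ∏_{j∈J}(x−α_j)·(1 + (−1)^{k−1−h} η σ_{k−h}(α_J, x))`. -/
def PhiRCh {m : ℕ} (α : Fin m → F) (η : F) (k h : ℕ) (J : Finset (Fin m)) (x : F) : F :=
  (∏ j ∈ J, (x - α j)) *
    (1 + (-1 : F) ^ (k - 1 - h) * η * Multiset.esymm (x ::ₘ J.val.map α) (k - h))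

/-- The image of a subgroup of `Fˣ` in `F`. -/
def unitsImage (G : Subgroup Fˣ) : Set F := (fun g : Fˣ => (g : F)) '' (G : Set Fˣ)

end

noncomputable section

variable {F : Type*} [Field F]

/-- The matrix `B` of STATEMENT 13 (with `k = r+1`): the `i`-th row, for `i ≤ k−2`, is
`(α_j^i, …, b^i−λc^i)` and the last row is
`(α_j^{k−1}+η α_j^k, …, b^{k−1}−λc^{k−1}+η(b^k−λc^k))`. -/
def Bmat13 {r : ℕ} (β : Fin r → F) (b c lam η : F) :
    Matrix (Fin (r + 1)) (Fin (r + 1)) F :=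
  Matrix.of fun i j =>
    if hj : (j : ℕ) < r then
      if (i : ℕ) < r then β ⟨j, hj⟩ ^ (i : ℕ)
      else β ⟨j, hj⟩ ^ r + η * β ⟨j, hj⟩ ^ (r + 1)
    else
      if (i : ℕ) < r then b ^ (i : ℕ) - lam * c ^ (i : ℕ)
      else b ^ r - lam * c ^ r + η * (b ^ (r + 1) - lam * c ^ (r + 1))

theorem Fin.Ioi_castSucc_eq_insert_last {n : ℕ} (i : Fin n) :
    Ioi i.castSucc = insert (Fin.last n) ((Ioi i).map Fin.castSuccEmb) := by
  rw [Fin.map_castSuccEmb_Ioi, Finset.Ioo_insert_right (Fin.castSucc_lt_last i),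
    ← Fin.top_eq_last, Finset.Ioc_top]

namespace Matrix

variable {R : Type*} [CommRing R] {n : ℕ}

theorem det_vandermonde_snoc (v : Fin n → R) (x : R) :
    det (vandermonde (Fin.snoc v x : Fin (n + 1) → R)) =
      det (vandermonde v) * ∏ i, (x - v i) := by
  have last_notMem (i : Fin n) : Fin.last n ∉ (Ioi i).map Fin.castSuccEmb := by simp
  have Ioi_last : Ioi (Fin.last n) = ∅ := Finset.Ioi_top
  simp only [det_vandermonde, Fin.prod_univ_castSucc, Fin.Ioi_castSucc_eq_insert_last,
    prod_insert (last_notMem _), prod_map, Fin.coe_castSuccEmb, Fin.snoc_castSucc,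
    Fin.snoc_last, Ioi_last, prod_empty, mul_one, prod_mul_distrib]
  ring

/-- The power `v j ^ (n + 1)` is a combination of the lower powers, with coefficients read off
`∏ k, (X - v k)`; the determinant only sees the coefficient of `X ^ n`, which is `-∑ k, v k`. -/
theorem det_transpose_vandermonde_updateRow_last_pow (v : Fin (n + 1) → R) :
    det ((vandermonde v)ᵀ.updateRow (Fin.last n) fun j => v j ^ (n + 1)) =
      (∑ j, v j) * det (vandermonde v) := by
  nontriviality R
  set P : R[X] := ∏ k, (X - C (v k))
  have hmonic : P.Monic := monic_prod_of_monic _ _ fun k _ => monic_X_sub_C (v k)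
  have hdeg : P.natDegree = n + 1 := by
    simp [P, natDegree_prod_of_monic _ _ fun k _ => monic_X_sub_C (v k)]
  have hrow : (fun j => v j ^ (n + 1)) = ∑ k : Fin (n + 1), (-P.coeff k) • (vandermonde v)ᵀ k := by
    funext j
    have hroot : P.eval (v j) = 0 := by
      simp only [P, eval_prod]
      exact prod_eq_zero (mem_univ j) (by simp)
    rw [hmonic.as_sum, hdeg] at hroot
    simp only [eval_add, eval_pow, eval_X, eval_finsetSum, eval_mul, eval_C] at hroot
    simp only [Finset.sum_apply, Pi.smul_apply, transpose_apply, vandermonde_apply, smul_eq_mul,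
      neg_mul, sum_neg_distrib, Fin.sum_univ_eq_sum_range (fun k => P.coeff k * v j ^ k)]
    linear_combination hroot
  have hcoeff : P.coeff n = -∑ j, v j := by
    simpa using prod_X_sub_C_coeff_card_pred univ v (by simp)
  rw [hrow, det_updateRow_sum, det_transpose, Fin.val_last, hcoeff, neg_neg, smul_eq_mul]

def twistedPowers (n : ℕ) (η x : R) : Fin (n + 1) → R :=
  fun i => if (i : ℕ) < n then x ^ (i : ℕ) else x ^ n + η * x ^ (n + 1)

def twistedVandermonde (η : R) (v : Fin (n + 1) → R) : Matrix (Fin (n + 1)) (Fin (n + 1)) R :=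
  of fun i j => twistedPowers n η (v j) i

theorem twistedVandermonde_eq_updateRow (η : R) (v : Fin (n + 1) → R) :
    twistedVandermonde η v = (vandermonde v)ᵀ.updateRow (Fin.last n)
      ((vandermonde v)ᵀ (Fin.last n) + η • fun j => v j ^ (n + 1)) := by
  ext i j
  induction i using Fin.lastCases with
  | last => simp [twistedVandermonde, twistedPowers, vandermonde_apply]
  | cast i =>
    simp [twistedVandermonde, twistedPowers, vandermonde_apply, (Fin.castSucc_lt_last i).ne]

theorem det_twistedVandermonde (η : R) (v : Fin (n + 1) → R) :
    det (twistedVandermonde η v) = (1 + η * ∑ j, v j) * det (vandermonde v) := by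
  rw [twistedVandermonde_eq_updateRow, det_updateRow_add, updateRow_eq_self, det_updateRow_smul,
    det_transpose_vandermonde_updateRow_last_pow, det_transpose]
  ring

theorem det_twistedVandermonde_snoc (η : R) (v : Fin n → R) (x : R) :
    det (twistedVandermonde η (Fin.snoc v x : Fin (n + 1) → R)) =
      det (vandermonde v) * ((∏ i, (x - v i)) * (1 + η * x + η * ∑ i, v i)) := by
  rw [det_twistedVandermonde, det_vandermonde_snoc, Fin.sum_univ_castSucc]
  simp only [Fin.snoc_castSucc, Fin.snoc_last]
  ring

theorem updateCol_last_twistedVandermonde_snoc (η : R) (v : Fin n → R) (x y : R) :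
    (twistedVandermonde η (Fin.snoc v x : Fin (n + 1) → R)).updateCol (Fin.last n)
      (twistedPowers n η y) = twistedVandermonde η (Fin.snoc v y) := by
  ext i j
  induction j using Fin.lastCases with
  | last => simp [twistedVandermonde]
  | cast j => simp [twistedVandermonde, (Fin.castSucc_lt_last j).ne]

end Matrix

open Matrix in
theorem Bmat13_eq_updateCol {r : ℕ} (β : Fin r → F) (b c lam η : F) :
    Bmat13 β b c lam η = (twistedVandermonde η (Fin.snoc β b : Fin (r + 1) → F)).updateCol
      (Fin.last r) (twistedPowers r η b - lam • twistedPowers r η c) := by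
  ext i j
  induction j using Fin.lastCases with
  | last =>
    by_cases hi : (i : ℕ) < r
    · simp [Bmat13, twistedPowers, hi]
    · simp [Bmat13, twistedPowers, hi]
      ring
  | cast j =>
    simp [Bmat13, twistedVandermonde, twistedPowers, (Fin.castSucc_lt_last j).ne]

theorem stmt13_general {r : ℕ} (β : Fin r → F) (b c lam η : F) :
    (Bmat13 β b c lam η).det =
      (∏ j : Fin r, ∏ l ∈ Finset.Ioi j, (β l - β j)) *
        ((∏ j : Fin r, (b - β j)) * (1 + η * b + η * ∑ j : Fin r, β j) -
          lam * ((∏ j : Fin r, (c - β j)) * (1 + η * c + η * ∑ j : Fin r, β j))) := by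
  rw [Bmat13_eq_updateCol, sub_eq_add_neg, ← neg_smul, Matrix.det_updateCol_add,
    Matrix.det_updateCol_smul, Matrix.updateCol_last_twistedVandermonde_snoc,
    Matrix.updateCol_last_twistedVandermonde_snoc, Matrix.det_twistedVandermonde_snoc,
    Matrix.det_twistedVandermonde_snoc, Matrix.det_vandermonde]
  ring

theorem stmt13 {r : ℕ} (β : Fin r → F) (hβ : Function.Injective β) (b c lam η : F) :
    (Bmat13 β b c lam η).det =
      (∏ j : Fin r, ∏ l ∈ Finset.Ioi j, (β l - β j)) *
        ((∏ j : Fin r, (b - β j)) * (1 + η * b + η * ∑ j : Fin r, β j) -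
          lam * ((∏ j : Fin r, (c - β j)) * (1 + η * c + η * ∑ j : Fin r, β j))) :=
  stmt13_general β b c lam η

end
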